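/- arXiv:1902.03140 — 3 statements merged into one kernel-verified Lean document; each statement's English description precedes it below -/
import Mathlib

section
/- If f is holomorphic on the open disc of radius 1/2 centered at 0, f(0) = 0, f'(z) = 1 + f(z)^2, and |f(z)| ≤ 2|z| on the disc, then |f(z) - z| ≤ 4|z|^3/3 for all z in the disc; consequently the only zero of f is z = 0. -/
/-!
Along the ray `t ↦ t z`, the function `g w = f w - w` has derivative `f (t z) ^ 2 z`,
of norm at most `4 t² ‖z‖³` by the bound `‖f w‖ ≤ 2 ‖w‖`. Comparing `g (t z)` with the
antiderivative `4 t³ ‖z‖³ / 3` of this bound gives `‖f z - z‖ ≤ 4 ‖z‖³ / 3`, which is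
less than `‖z‖` for `0 < ‖z‖ < 1/2`, so `f z ≠ 0` there.
-/

open Metric Set

variable {E : Type*} [NormedAddCommGroup E] [NormedSpace ℂ E]

theorem ofReal_mul_mem_ball {r t : ℝ} {z : ℂ} (ht : t ∈ Icc (0 : ℝ) 1)
    (hz : z ∈ ball (0 : ℂ) r) : (t : ℂ) * z ∈ ball (0 : ℂ) r := by
  rw [mem_ball_zero_iff] at hz ⊢
  rw [norm_mul, Complex.norm_real, Real.norm_of_nonneg ht.1]
  nlinarith [ht.2, norm_nonneg z]

theorem HasDerivAt.comp_ofReal_mul {g : ℂ → E} {g' : E} {z : ℂ} {t : ℝ}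
    (hg : HasDerivAt g g' (t * z)) : HasDerivAt (fun s : ℝ => g (s * z)) (z • g') t := by
  have hray : HasDerivAt (fun s : ℝ => (s : ℂ) * z) z t := by
    simpa using (hasDerivAt_id t).ofReal_comp.mul_const z
  exact hg.scomp t hray

theorem norm_le_of_norm_deriv_le_mul_pow {g g' : ℂ → E} {r C : ℝ} (n : ℕ)
    (hg : ∀ w ∈ ball (0 : ℂ) r, HasDerivAt g (g' w) w) (hg0 : g 0 = 0)
    (hbound : ∀ w ∈ ball (0 : ℂ) r, ‖g' w‖ ≤ C * ‖w‖ ^ n) {z : ℂ} (hz : z ∈ ball (0 : ℂ) r) :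
    ‖g z‖ ≤ C * ‖z‖ ^ (n + 1) / (n + 1) := by
  have hray : ∀ t ∈ Icc (0 : ℝ) 1,
      HasDerivAt (fun s : ℝ => g (s * z)) (z • g' (t * z)) t := fun t ht =>
    (hg _ (ofReal_mul_mem_ball ht hz)).comp_ofReal_mul
  have hB : ∀ t : ℝ, HasDerivAt (fun s => C * ‖z‖ ^ (n + 1) * s ^ (n + 1) / (n + 1))
      (C * ‖z‖ ^ (n + 1) * t ^ n) t := fun t => by
    refine (((hasDerivAt_pow (n + 1) t).const_mul (C * ‖z‖ ^ (n + 1))).div_const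
      ((n : ℝ) + 1)).congr_deriv ?_
    push_cast
    field_simp
  have hderiv_le : ∀ t ∈ Ico (0 : ℝ) 1, ‖z • g' (t * z)‖ ≤ C * ‖z‖ ^ (n + 1) * t ^ n := by
    intro t ht
    have h := hbound _ (ofReal_mul_mem_ball (Ico_subset_Icc_self ht) hz)
    rw [norm_mul, Complex.norm_real, Real.norm_of_nonneg ht.1] at h
    calc ‖z • g' (t * z)‖ = ‖z‖ * ‖g' (t * z)‖ := norm_smul z _
      _ ≤ ‖z‖ * (C * (t * ‖z‖) ^ n) := mul_le_mul_of_nonneg_left h (norm_nonneg z)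
      _ = C * ‖z‖ ^ (n + 1) * t ^ n := by ring
  have hboundary := image_norm_le_of_norm_deriv_right_le_deriv_boundary
    (f := fun s : ℝ => g (s * z)) (a := 0) (b := 1)
    (fun t ht => (hray t ht).continuousAt.continuousWithinAt)
    (fun t ht => (hray t (Ico_subset_Icc_self ht)).hasDerivWithinAt)
    (by simp [hg0]) hB hderiv_le (right_mem_Icc.2 zero_le_one)
  simpa using hboundary

/-- With the bound `|f z| ≤ 2|z|`, one has `|f z - z| ≤ 4|z|^3/3`; consequently
the only zero of `f` is `0`. -/
theorem stmt_4 (f : ℂ → ℂ) (h0 : f 0 = 0)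
    (hf : ∀ z ∈ Metric.ball (0 : ℂ) (1/2), HasDerivAt f (1 + f z ^ 2) z)
    (hb : ∀ z ∈ Metric.ball (0 : ℂ) (1/2), ‖f z‖ ≤ 2 * ‖z‖) :
    ∀ z ∈ Metric.ball (0 : ℂ) (1/2),
      ‖f z - z‖ ≤ 4 * ‖z‖ ^ 3 / 3 ∧ (f z = 0 → z = 0) := by
  intro z hz
  have hg : ∀ w ∈ ball (0 : ℂ) (1 / 2), HasDerivAt (fun w => f w - w) (f w ^ 2) w :=
    fun w hw => ((hf w hw).sub (hasDerivAt_id' w)).congr_deriv (by ring)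
  have hsq : ∀ w ∈ ball (0 : ℂ) (1 / 2), ‖f w ^ 2‖ ≤ 4 * ‖w‖ ^ 2 := fun w hw => by
    rw [norm_pow]
    nlinarith [hb w hw, norm_nonneg (f w)]
  have key : ‖f z - z‖ ≤ 4 * ‖z‖ ^ 3 / 3 := by
    have hcubic := norm_le_of_norm_deriv_le_mul_pow 2 hg (by simp [h0]) hsq hz
    norm_num at hcubic
    exact hcubic
  refine ⟨key, fun hfz => ?_⟩
  rw [hfz, zero_sub, norm_neg] at key
  by_contra hz0
  have hpos : 0 < ‖z‖ := norm_pos_iff.2 hz0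
  have hsmall : ‖z‖ ^ 2 < 1 / 4 := by nlinarith [mem_ball_zero_iff.1 hz]
  nlinarith [mul_lt_mul_of_pos_left hsmall hpos]
end

section
/- If f is holomorphic on the open disc of radius 1/2 about 0, satisfies f(0)=0, f' = 1 + f^2, and |f(z)| ≤ 2|z|, then for z = x + iy in the disc one has |Im f(z) - y| ≤ 4(x^2 + y^2)|y|; hence f(z) is real only if z is real. -/
/-!
On the real diameter, `u t = Im f (t x)` has `u 0 = 0` and `|u'| ≤ K |u|`, because
`Im ((1 + f²) x) = 2 x Re f Im f`; Grönwall gives `u = 0`, so `f` is real there. Along the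
vertical segment from `x` to `z = x + iy`, `d/ds (Im f (x + is) - s) = Re (f²)`, which is at most
`|f|² ≤ 4|z|²` in absolute value, so the mean value inequality gives the estimate. As `4|z|² < 1`,
it forces `y = 0` when `Im f z = 0`.
-/

open Complex Set Metric

theorem HasDerivAt.comp_ofReal_line {f : ℂ → ℂ} {f' a v : ℂ} {t : ℝ}
    (h : HasDerivAt f f' (a + t * v)) :
    HasDerivAt (fun s : ℝ => f (a + s * v)) (f' * v) t := by
  have hline : HasDerivAt (fun w : ℂ => a + w * v) v t := by
    simpa using ((hasDerivAt_id (t : ℂ)).mul_const v).const_add a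
  exact (h.comp (t : ℂ) hline).comp_ofReal

theorem HasDerivAt.im {F : ℝ → ℂ} {F' : ℂ} {t : ℝ} (h : HasDerivAt F F' t) :
    HasDerivAt (fun s => (F s).im) F'.im t :=
  imCLM.hasFDerivAt.comp_hasDerivAt t h

theorem norm_re_add_mul_I_le {z : ℂ} {s : ℝ} (hs : s ∈ uIcc 0 z.im) :
    ‖(z.re : ℂ) + s * I‖ ≤ ‖z‖ := by
  have hs' : |s| ≤ |z.im| := by simpa using abs_sub_left_of_mem_uIcc hs
  rw [← pow_le_pow_iff_left₀ (norm_nonneg _) (norm_nonneg _) two_ne_zero, Complex.sq_norm,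
    Complex.sq_norm, normSq_add_mul_I, normSq_apply]
  nlinarith [sq_le_sq.mpr hs']

variable {f : ℂ → ℂ} {r : ℝ}

theorem im_apply_ofReal_eq_zero_of_hasDerivAt_one_add_sq (h0 : f 0 = 0)
    (hf : ∀ z ∈ ball (0 : ℂ) r, HasDerivAt f (1 + f z ^ 2) z) {x : ℝ}
    (hx : (x : ℂ) ∈ ball (0 : ℂ) r) : (f x).im = 0 := by
  have hmem : ∀ t ∈ Icc (0 : ℝ) 1, (0 + t * x : ℂ) ∈ ball (0 : ℂ) r := by
    intro t ht
    rw [mem_ball_zero_iff] at hx ⊢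
    rw [zero_add, norm_mul, norm_real, Real.norm_of_nonneg ht.1]
    exact (mul_le_of_le_one_left (norm_nonneg _) ht.2).trans_lt hx
  have hderiv : ∀ t ∈ Icc (0 : ℝ) 1, HasDerivAt (fun s : ℝ => f (0 + s * x))
      ((1 + f (0 + t * x) ^ 2) * x) t := fun t ht => (hf _ (hmem t ht)).comp_ofReal_line
  obtain ⟨M, hM⟩ := isCompact_Icc.exists_bound_of_continuousOn
    fun t ht => (hderiv t ht).continuousAt.continuousWithinAt
  have hzero := eq_zero_of_abs_deriv_le_mul_abs_self_of_eq_zero_right (K := 2 * M * |x|)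
    (f := fun s : ℝ => (f (0 + s * x)).im)
    (fun t ht => (hderiv t ht).im.continuousAt.continuousWithinAt)
    (fun t ht => (hderiv t (Ico_subset_Icc_self ht)).im.hasDerivWithinAt)
    (by simp [h0]) ?_ 1 (right_mem_Icc.mpr zero_le_one)
  · simpa using hzero
  intro t ht
  set w := f (0 + t * x)
  have him : ((1 + w ^ 2) * x).im = 2 * w.re * w.im * x := by
    simp only [mul_im, add_im, add_re, one_re, one_im, sq, mul_re, ofReal_re, ofReal_im]
    ring
  have hre : |w.re| ≤ M := (abs_re_le_norm w).trans (hM t (Ico_subset_Icc_self ht))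
  simp only [Real.norm_eq_abs, him, abs_mul, abs_two]
  calc 2 * |w.re| * |w.im| * |x| ≤ 2 * M * |w.im| * |x| := by gcongr
    _ = 2 * M * |x| * |w.im| := by ring

theorem abs_im_apply_sub_im_le_of_hasDerivAt_one_add_sq {c : ℝ}
    (hf : ∀ z ∈ ball (0 : ℂ) r, HasDerivAt f (1 + f z ^ 2) z)
    (hb : ∀ z ∈ ball (0 : ℂ) r, ‖f z‖ ≤ c * ‖z‖) {z : ℂ} (hz : z ∈ ball (0 : ℂ) r)
    (hre : (f z.re).im = 0) :
    |(f z).im - z.im| ≤ c ^ 2 * ‖z‖ ^ 2 * |z.im| := by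
  have hmem : ∀ s ∈ uIcc 0 z.im, (z.re + s * I : ℂ) ∈ ball (0 : ℂ) r := fun s hs => by
    rw [mem_ball_zero_iff] at hz ⊢
    exact (norm_re_add_mul_I_le hs).trans_lt hz
  have hderiv : ∀ s ∈ uIcc 0 z.im, HasDerivAt (fun s : ℝ => (f (z.re + s * I)).im - s)
      (f (z.re + s * I) ^ 2).re s := fun s hs => by
    refine ((hf _ (hmem s hs)).comp_ofReal_line.im.sub (hasDerivAt_id' s)).congr_deriv ?_
    simp
  have hbound : ∀ s ∈ uIcc 0 z.im, ‖(f (z.re + s * I) ^ 2).re‖ ≤ c ^ 2 * ‖z‖ ^ 2 := by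
    intro s hs
    calc ‖(f (z.re + s * I) ^ 2).re‖ ≤ ‖f (z.re + s * I)‖ ^ 2 :=
          (abs_re_le_norm _).trans_eq (norm_pow _ _)
      _ ≤ (c * ‖(z.re + s * I : ℂ)‖) ^ 2 := by
          gcongr
          exact hb _ (hmem s hs)
      _ ≤ c ^ 2 * ‖z‖ ^ 2 := by
          rw [mul_pow]
          gcongr
          exact norm_re_add_mul_I_le hs
  have key := (convex_uIcc 0 z.im).norm_image_sub_le_of_norm_hasDerivWithin_le
    (fun s hs => (hderiv s hs).hasDerivWithinAt) hbound left_mem_uIcc right_mem_uIcc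
  simpa [hre, re_add_im] using key

/-- With the bound `|f z| ≤ 2|z|`: for `z = x + iy` in the disc,
`|Im (f z) - y| ≤ 4 (x^2 + y^2) |y|`; hence `f z` real only if `z` is real. -/
theorem stmt_5 (f : ℂ → ℂ) (h0 : f 0 = 0)
    (hf : ∀ z ∈ Metric.ball (0 : ℂ) (1/2), HasDerivAt f (1 + f z ^ 2) z)
    (hb : ∀ z ∈ Metric.ball (0 : ℂ) (1/2), ‖f z‖ ≤ 2 * ‖z‖) :
    ∀ z ∈ Metric.ball (0 : ℂ) (1/2),
      |(f z).im - z.im| ≤ 4 * (z.re ^ 2 + z.im ^ 2) * |z.im| ∧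
      ((f z).im = 0 → z.im = 0) := by
  intro z hz
  have hx : (z.re : ℂ) ∈ ball (0 : ℂ) (1/2) := by
    rw [mem_ball_zero_iff] at hz ⊢
    rw [norm_real, Real.norm_eq_abs]
    exact (abs_re_le_norm z).trans_lt hz
  have hnorm : ‖z‖ ^ 2 = z.re ^ 2 + z.im ^ 2 := by rw [Complex.sq_norm, normSq_apply]; ring
  have hsmall : 4 * (z.re ^ 2 + z.im ^ 2) < 1 := by
    rw [mem_ball_zero_iff] at hz
    nlinarith [norm_nonneg z]
  have key := abs_im_apply_sub_im_le_of_hasDerivAt_one_add_sq hf hb hz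
    (im_apply_ofReal_eq_zero_of_hasDerivAt_one_add_sq h0 hf hx)
  rw [hnorm] at key
  refine ⟨by linarith, fun him => ?_⟩
  rw [him, zero_sub, abs_neg] at key
  by_contra hy
  nlinarith [abs_pos.mpr hy]
end

section
/- Let f be holomorphic on the open disc E = B_{p}(0) (p = π/2) with f(0) = 0 and f' = 1 + f^2. Then for all a, z in the disc B_{p/2}(0), one has f(a)f(z) ≠ 1 and f(a + z) = (f(a) + f(z)) / (1 - f(a) f(z)). -/
/-!
The function `g = f cos - sin` satisfies the linear equation `g' = f g` with `g 0 = 0`; along each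
radius this is a real linear ODE with bounded coefficient, so Grönwall's inequality gives `g = 0`,
i.e. `f = tan` on the disc. The claim is then the addition formula for `tan`, and
`cos (a + z) = cos a cos z (1 - tan a tan z)` is nonzero because `‖a + z‖ < π / 2`.
-/

open Complex Metric Set

theorem Complex.cos_ne_zero_of_norm_lt {z : ℂ} (hz : ‖z‖ < Real.pi / 2) : cos z ≠ 0 := by
  refine cos_ne_zero_iff.mpr fun k hk => hz.not_ge ?_
  have hodd : (1 : ℝ) ≤ |2 * (k : ℝ) + 1| := by exact_mod_cast Int.one_le_abs (by omega)
  have hnorm : ‖z‖ = |2 * (k : ℝ) + 1| * (Real.pi / 2) := by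
    rw [hk, show (2 * (k : ℂ) + 1) * Real.pi / 2 = ((2 * (k : ℝ) + 1) * (Real.pi / 2) : ℝ) by
      push_cast; ring, norm_real, Real.norm_eq_abs, abs_mul,
      abs_of_pos (a := Real.pi / 2) (by positivity)]
  rw [hnorm]
  nlinarith [Real.pi_pos]

theorem Complex.tan_mul_tan_ne_one {a z : ℂ} (ha : cos a ≠ 0) (hz : cos z ≠ 0)
    (haz : cos (a + z) ≠ 0) : tan a * tan z ≠ 1 := by
  have hcos_add : cos (a + z) = cos a * cos z * (1 - tan a * tan z) := by
    rw [cos_add, tan_eq_sin_div_cos, tan_eq_sin_div_cos]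
    field_simp
  intro h
  exact haz (by rw [hcos_add, h, sub_self, mul_zero])

section

variable {E : Type*} [NormedAddCommGroup E] [NormedSpace ℂ E]

theorem eqOn_zero_of_hasDerivAt_smul_self {g : ℂ → E} {F : ℂ → ℂ} {c : ℂ} {r : ℝ}
    (hg : ∀ z ∈ ball c r, HasDerivAt g (F z • g z) z) (hF : ContinuousOn F (ball c r))
    (hgc : g c = 0) : EqOn g 0 (ball c r) := by
  intro w hw
  let γ : ℝ → ℂ := fun t => c + t * (w - c)
  have hγ : MapsTo γ (Icc 0 1) (ball c r) := fun t ht =>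
    (convex_ball c r).add_smul_sub_mem (mem_ball_self (pos_of_mem_ball hw)) hw ht
  have hγ' : ∀ t ∈ Icc (0 : ℝ) 1,
      HasDerivAt (g ∘ γ) ((w - c) • F (γ t) • g (γ t)) t := by
    intro t ht
    have hline : HasDerivAt γ (w - c) t := by
      have := ((hasDerivAt_id t).ofReal_comp.mul_const (w - c)).const_add c
      simpa only [id, ofReal_one, one_mul] using this
    exact (hg _ (hγ ht)).scomp t hline
  obtain ⟨C, hC⟩ := isCompact_Icc.exists_bound_of_continuousOn
    (hF.comp (by fun_prop) hγ)
  have key := eq_zero_of_abs_deriv_le_mul_abs_self_of_eq_zero_right (K := C * ‖w - c‖)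
    (fun t ht => (hγ' t ht).continuousAt.continuousWithinAt)
    (fun t ht => (hγ' t (Ico_subset_Icc_self ht)).hasDerivWithinAt)
    (by simp [γ, hgc]) (fun t ht => ?_) 1 (by simp)
  · simpa [γ] using key
  · calc ‖(w - c) • F (γ t) • g (γ t)‖ = ‖F (γ t)‖ * ‖w - c‖ * ‖g (γ t)‖ := by
          rw [norm_smul, norm_smul]; ring
      _ ≤ C * ‖w - c‖ * ‖g (γ t)‖ := by
          gcongr
          exact hC t (Ico_subset_Icc_self ht)

end

theorem Complex.eqOn_tan_of_hasDerivAt_one_add_sq {f : ℂ → ℂ} (h0 : f 0 = 0)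
    (hf : ∀ z ∈ ball (0 : ℂ) (Real.pi / 2), HasDerivAt f (1 + f z ^ 2) z) :
    EqOn f tan (ball 0 (Real.pi / 2)) := by
  have hg : ∀ z ∈ ball (0 : ℂ) (Real.pi / 2),
      HasDerivAt (fun z => f z * cos z - sin z) (f z • (f z * cos z - sin z)) z := fun z hz =>
    (((hf z hz).mul (hasDerivAt_cos z)).sub (hasDerivAt_sin z)).congr_deriv
      (by rw [smul_eq_mul]; ring)
  have hfc : ContinuousOn f (ball 0 (Real.pi / 2)) := fun z hz =>
    (hf z hz).continuousAt.continuousWithinAt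
  intro w hw
  have hgw : f w * cos w - sin w = 0 := eqOn_zero_of_hasDerivAt_smul_self hg hfc (by simp [h0]) hw
  have hcos : cos w ≠ 0 := cos_ne_zero_of_norm_lt (mem_ball_zero_iff.mp hw)
  rw [tan_eq_sin_div_cos, eq_div_iff hcos]
  exact sub_eq_zero.mp hgw

/-- Addition theorem: if `f` solves `f' = 1 + f^2`, `f 0 = 0` on the disc `B_{π/2}(0)`,
then for `a, z` in `B_{π/4}(0)`, `f a * f z ≠ 1` and
`f (a + z) = (f a + f z) / (1 - f a * f z)`. -/
theorem stmt_10 (f : ℂ → ℂ) (h0 : f 0 = 0)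
    (hf : ∀ z ∈ Metric.ball (0 : ℂ) (Real.pi / 2), HasDerivAt f (1 + f z ^ 2) z) :
    ∀ a ∈ Metric.ball (0 : ℂ) (Real.pi / 4), ∀ z ∈ Metric.ball (0 : ℂ) (Real.pi / 4),
      f a * f z ≠ 1 ∧ f (a + z) = (f a + f z) / (1 - f a * f z) := by
  intro a ha z hz
  rw [mem_ball_zero_iff] at ha hz
  have hsum : ‖a + z‖ < Real.pi / 2 := by linarith [norm_add_le a z]
  have hquarter : Real.pi / 4 < Real.pi / 2 := by linarith [Real.pi_pos]
  have hca := cos_ne_zero_of_norm_lt (ha.trans hquarter)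
  have hcz := cos_ne_zero_of_norm_lt (hz.trans hquarter)
  have htan := eqOn_tan_of_hasDerivAt_one_add_sq h0 hf
  rw [htan (mem_ball_zero_iff.mpr (ha.trans hquarter)),
    htan (mem_ball_zero_iff.mpr (hz.trans hquarter)), htan (mem_ball_zero_iff.mpr hsum)]
  exact ⟨tan_mul_tan_ne_one hca hcz (cos_ne_zero_of_norm_lt hsum),
    tan_add' ⟨cos_ne_zero_iff.mp hca, cos_ne_zero_iff.mp hcz⟩⟩
end
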